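/- arXiv:2605.06704 — 4 statements merged into one kernel-verified Lean document; each statement's English description precedes it below -/
import Mathlib

section
/- Let a: ℝ → ℝ be smooth and nowhere vanishing, and consider the canonical linear form f(x,u,p,q) = a(x)³·u. Then the invariants evaluate to I₁ = 0, I₂ = 0, I₃ = −a(x)³, J₃ = −a(x), I₄ = 0, I₅ = −a′(x)/a(x)², I₇ = 0, Q = 0, and K = (2a(x)a″(x) − 3a′(x)²)/a(x)⁴; consequently all the relative invariants I₆, I₈, I₁₀, I₁₁, I₁₂, I₁₃, I₁₄, I₁₅ vanish identically, and D̂ₓK = K′(x) where K is regarded as a function of x alone. -/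
/-!
Invariants of the third-order ODE `u''' = f(x, u, u', u'')` under contact
transformations, following Cartan's equivalence method.
We write `p = u'`, `q = u''`.
-/

noncomputable section

/-- The real cube root of a real number. -/
def cbrt (y : ℝ) : ℝ := if 0 ≤ y then y ^ ((1 : ℝ)/3) else -((-y) ^ ((1 : ℝ)/3))

/-- Functions of `(x, u, p, q)`. -/
abbrev Fn : Type := ℝ → ℝ → ℝ → ℝ → ℝ

/-- Functions of `(x, u, p)`. -/
abbrev Fn3 : Type := ℝ → ℝ → ℝ → ℝ

/-- Partial derivative in `x` of a function of `(x,u,p,q)`. -/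
def pdx (g : Fn) : Fn := fun x u p q => deriv (fun t => g t u p q) x
/-- Partial derivative in `u` of a function of `(x,u,p,q)`. -/
def pdu (g : Fn) : Fn := fun x u p q => deriv (fun t => g x t p q) u
/-- Partial derivative in `p` of a function of `(x,u,p,q)`. -/
def pdp (g : Fn) : Fn := fun x u p q => deriv (fun t => g x u t q) p
/-- Partial derivative in `q` of a function of `(x,u,p,q)`. -/
def pdq (g : Fn) : Fn := fun x u p q => deriv (fun t => g x u p t) q

/-- Partial derivative in `x` of a function of `(x,u,p)`. -/
def pdx3 (g : Fn3) : Fn3 := fun x u p => deriv (fun t => g t u p) x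
/-- Partial derivative in `u` of a function of `(x,u,p)`. -/
def pdu3 (g : Fn3) : Fn3 := fun x u p => deriv (fun t => g x t p) u
/-- Partial derivative in `p` of a function of `(x,u,p)`. -/
def pdp3 (g : Fn3) : Fn3 := fun x u p => deriv (fun t => g x u t) p

/-- Lift of a function of `(x,u,p)` to a function of `(x,u,p,q)`, constant in `q`. -/
def lift (g : Fn3) : Fn := fun x u p _ => g x u p

/-- The total derivative operator `D̂ₓ = ∂ₓ + p ∂ᵤ + q ∂ₚ + f ∂_q` of the ODE `u''' = f`. -/
def Dhat (f g : Fn) : Fn := fun x u p q =>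
  pdx g x u p q + p * pdu g x u p q + q * pdp g x u p q + f x u p q * pdq g x u p q

/-- `I₁ = −f_q`. -/
def I1 (f : Fn) : Fn := fun x u p q => -(pdq f x u p q)

/-- `I₂ = −(2/9)I₁² − f_p − (1/3)D̂ₓI₁`. -/
def I2 (f : Fn) : Fn := fun x u p q =>
  -(2/9) * (I1 f x u p q)^2 - pdp f x u p q - (1/3) * Dhat f (I1 f) x u p q

/-- `I₃ = −(1/3)I₁I₂ − f_u − (1/2)D̂ₓI₂`. -/
def I3 (f : Fn) : Fn := fun x u p q =>
  -(1/3) * I1 f x u p q * I2 f x u p q - pdu f x u p q - (1/2) * Dhat f (I2 f) x u p q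

/-- `J₃`, the real cube root of `I₃`. -/
def J3 (f : Fn) : Fn := fun x u p q => cbrt (I3 f x u p q)

/-- `I₄ = (J₃)_q`. -/
def I4 (f : Fn) : Fn := pdq (J3 f)

/-- `I₅ = (1/(3J₃²))(I₁J₃ + 3D̂ₓJ₃)`. -/
def I5 (f : Fn) : Fn := fun x u p q =>
  (1 / (3 * (J3 f x u p q)^2)) * (I1 f x u p q * J3 f x u p q + 3 * Dhat f (J3 f) x u p q)

/-- `I₇ = −(I₅)_q J₃²`. -/
def I7 (f : Fn) : Fn := fun x u p q => -(pdq (I5 f) x u p q) * (J3 f x u p q)^2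

/-- `I₉ = 2J₃D̂ₓI₅ − I₂ + J₃²I₅²`. -/
def I9 (f : Fn) : Fn := fun x u p q =>
  2 * J3 f x u p q * Dhat f (I5 f) x u p q - I2 f x u p q
    + (J3 f x u p q)^2 * (I5 f x u p q)^2

/-- `K = I₉/J₃²`. -/
def Kinv (f : Fn) : Fn := fun x u p q => I9 f x u p q / (J3 f x u p q)^2

/-- `Q = −(I₁I₇ + 3J₃²(I₅)_p + 3(J₃)_u − 3J₃I₄D̂ₓI₅)/(3J₃)`. -/
def Qinv (f : Fn) : Fn := fun x u p q =>
  -(I1 f x u p q * I7 f x u p q + 3 * (J3 f x u p q)^2 * pdp (I5 f) x u p q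
      + 3 * pdu (J3 f) x u p q
      - 3 * J3 f x u p q * I4 f x u p q * Dhat f (I5 f) x u p q)
    / (3 * J3 f x u p q)

/-- `I₆ = (2/3)(J₃)_q I₁ − (1/3)(I₁)_q J₃ − 2(J₃)_p + 2J₃I₄I₅`. -/
def I6 (f : Fn) : Fn := fun x u p q =>
  (2/3) * pdq (J3 f) x u p q * I1 f x u p q - (1/3) * pdq (I1 f) x u p q * J3 f x u p q
    - 2 * pdp (J3 f) x u p q + 2 * J3 f x u p q * I4 f x u p q * I5 f x u p q

/-- `I₈ = (I₄)_q`. -/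
def I8 (f : Fn) : Fn := pdq (I4 f)

/-- `I₁₀ = I₄D̂ₓI₇ − J₃(I₇)_p + J₃²(I₄/J₃)_u`. -/
def I10 (f : Fn) : Fn := fun x u p q =>
  I4 f x u p q * Dhat f (I7 f) x u p q - J3 f x u p q * pdp (I7 f) x u p q
    + (J3 f x u p q)^2 *
      pdu (fun x' u' p' q' => I4 f x' u' p' q' / J3 f x' u' p' q') x u p q

/-- `I₁₁ = (J₃)_u − D̂ₓI₇`. -/
def I11 (f : Fn) : Fn := fun x u p q =>
  pdu (J3 f) x u p q - Dhat f (I7 f) x u p q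

/-- `I₁₂`. -/
def I12 (f : Fn) : Fn := fun x u p q =>
  6 * I1 f x u p q * J3 f x u p q *
      (I5 f x u p q * I7 f x u p q - I4 f x u p q * Dhat f (I5 f) x u p q)
    - 18 * (J3 f x u p q)^3 * I4 f x u p q
    + 6 * pdp (I5 f) x u p q * I1 f x u p q * (J3 f x u p q)^2
    - 18 * I2 f x u p q * J3 f x u p q * I4 f x u p q * I5 f x u p q
    - 18 * J3 f x u p q * I7 f x u p q * Dhat f (I5 f) x u p q
    + 18 * (J3 f x u p q)^2 * pdu (I5 f) x u p q
    + 18 * I2 f x u p q * Dhat f (I4 f) x u p q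
    + 2 * (I1 f x u p q)^2 * I7 f x u p q
    - 9 * pdp (I2 f) x u p q * J3 f x u p q
    + 6 * (J3 f x u p q)^2 *
        pdu (fun x' u' p' q' => I1 f x' u' p' q' / J3 f x' u' p' q') x u p q
    + 36 * I2 f x u p q * I7 f x u p q

/-- `I₁₃ = (J₃I₄I₅ − I₇)D̂ₓK + J₃K_u − J₃²I₅K_p`. -/
def I13 (f : Fn) : Fn := fun x u p q =>
  (J3 f x u p q * I4 f x u p q * I5 f x u p q - I7 f x u p q) * Dhat f (Kinv f) x u p q
    + J3 f x u p q * pdu (Kinv f) x u p q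
    - (J3 f x u p q)^2 * I5 f x u p q * pdp (Kinv f) x u p q

/-- `I₁₄ = K_q`. -/
def I14 (f : Fn) : Fn := pdq (Kinv f)

/-- `I₁₅ = I₄D̂ₓK − J₃K_p`. -/
def I15 (f : Fn) : Fn := fun x u p q =>
  I4 f x u p q * Dhat f (Kinv f) x u p q - J3 f x u p q * pdp (Kinv f) x u p q

/-!
For `f = a(x)³ u` we have `f_p = f_q = 0` and `f_u = a³`, so `I₁ = I₂ = 0`, `I₃ = −a³`
and `J₃ = −a`. Everything after `J₃` is built from `I₁, I₂, J₃` by `D̂ₓ` and partial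
derivatives; on functions of `x` alone, `D̂ₓ` acts as `d/dx` and the partial derivatives in
`u, p, q` vanish. Hence `I₅ = −a′/a²` and `K` depend on `x` only, and every term of `I₄, I₇, Q`
and of the relative invariants carries a vanishing `u`-, `p`- or `q`-derivative.
-/

def ofX (g : ℝ → ℝ) : Fn := fun x _ _ _ => g x

@[simp]
lemma ofX_apply (g : ℝ → ℝ) (x u p q : ℝ) : ofX g x u p q = g x := rfl

@[simp]
lemma pdx_ofX (g : ℝ → ℝ) : pdx (ofX g) = ofX (deriv g) := rfl

@[simp]
lemma pdu_ofX (g : ℝ → ℝ) : pdu (ofX g) = 0 := by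
  funext x u p q; simp [pdu]

@[simp]
lemma pdp_ofX (g : ℝ → ℝ) : pdp (ofX g) = 0 := by
  funext x u p q; simp [pdp]

@[simp]
lemma pdq_ofX (g : ℝ → ℝ) : pdq (ofX g) = 0 := by
  funext x u p q; simp [pdq]

@[simp]
lemma Dhat_ofX (f : Fn) (g : ℝ → ℝ) : Dhat f (ofX g) = ofX (deriv g) := by
  funext x u p q; simp [Dhat]

@[simp]
lemma pdx_zero : pdx 0 = 0 := by
  funext x u p q; simp [pdx]

@[simp]
lemma pdu_zero : pdu 0 = 0 := pdu_ofX 0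

@[simp]
lemma pdp_zero : pdp 0 = 0 := pdp_ofX 0

@[simp]
lemma pdq_zero : pdq 0 = 0 := pdq_ofX 0

@[simp]
lemma Dhat_zero (f : Fn) : Dhat f 0 = 0 := by
  funext x u p q; simp [Dhat]

section XOnly

variable {f : Fn} {i₁ i₂ j i₅ k : ℝ → ℝ}

lemma I4_eq_zero (hJ : J3 f = ofX j) : I4 f = 0 := by
  rw [I4, hJ, pdq_ofX]

lemma I5_eq_ofX (h₁ : I1 f = ofX i₁) (hJ : J3 f = ofX j) :
    I5 f = ofX fun x => (i₁ x * j x + 3 * deriv j x) / (3 * j x ^ 2) := by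
  funext x u p q
  simp only [I5, h₁, hJ, Dhat_ofX, ofX_apply]
  ring

lemma I7_eq_zero (h₅ : I5 f = ofX i₅) : I7 f = 0 := by
  funext x u p q; simp [I7, h₅]

lemma Kinv_eq_ofX (h₂ : I2 f = ofX i₂) (hJ : J3 f = ofX j) (h₅ : I5 f = ofX i₅) :
    Kinv f = ofX fun x => (2 * j x * deriv i₅ x - i₂ x + j x ^ 2 * i₅ x ^ 2) / j x ^ 2 := by
  funext x u p q; simp [Kinv, I9, h₂, hJ, h₅]

lemma Qinv_eq_zero (hJ : J3 f = ofX j) (h₅ : I5 f = ofX i₅) : Qinv f = 0 := by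
  funext x u p q; simp [Qinv, I4_eq_zero hJ, I7_eq_zero h₅, hJ, h₅]

lemma I6_eq_zero (h₁ : I1 f = ofX i₁) (hJ : J3 f = ofX j) : I6 f = 0 := by
  funext x u p q; simp [I6, I4_eq_zero hJ, h₁, hJ]

lemma I8_eq_zero (hJ : J3 f = ofX j) : I8 f = 0 := by
  rw [I8, I4_eq_zero hJ, pdq_zero]

lemma I10_eq_zero (hJ : J3 f = ofX j) (h₅ : I5 f = ofX i₅) : I10 f = 0 := by
  funext x u p q; simp [I10, I4_eq_zero hJ, I7_eq_zero h₅, pdu]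

lemma I11_eq_zero (hJ : J3 f = ofX j) (h₅ : I5 f = ofX i₅) : I11 f = 0 := by
  funext x u p q; simp [I11, I7_eq_zero h₅, hJ]

lemma I12_eq_zero (h₁ : I1 f = ofX i₁) (h₂ : I2 f = ofX i₂) (hJ : J3 f = ofX j)
    (h₅ : I5 f = ofX i₅) : I12 f = 0 := by
  funext x u p q
  simp [I12, I4_eq_zero hJ, I7_eq_zero h₅, h₁, h₂, hJ, h₅, pdu]

lemma I13_eq_zero (hJ : J3 f = ofX j) (h₅ : I5 f = ofX i₅) (hK : Kinv f = ofX k) :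
    I13 f = 0 := by
  funext x u p q; simp [I13, I4_eq_zero hJ, I7_eq_zero h₅, hK]

lemma I14_eq_zero (hK : Kinv f = ofX k) : I14 f = 0 := by
  rw [I14, hK, pdq_ofX]

lemma I15_eq_zero (hJ : J3 f = ofX j) (hK : Kinv f = ofX k) : I15 f = 0 := by
  funext x u p q; simp [I15, I4_eq_zero hJ, hK]

end XOnly

lemma cbrt_pow_three (y : ℝ) : cbrt (y ^ 3) = y := by
  have root : ∀ z : ℝ, 0 ≤ z → (z ^ 3) ^ ((1 : ℝ) / 3) = z := fun z hz => by
    rw [← Real.rpow_natCast, ← Real.rpow_mul hz]; norm_num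
  have odd3 : Odd 3 := by decide
  rcases le_or_gt 0 y with hy | hy
  · rw [cbrt, if_pos (by positivity), root y hy]
  · rw [cbrt, if_neg (not_le.2 ((odd3.pow_neg_iff).2 hy)), ← odd3.neg_pow,
      root (-y) (by linarith), neg_neg]

lemma hasDerivAt_neg_deriv_div_sq {a : ℝ → ℝ} {x : ℝ} (ha : DifferentiableAt ℝ a x)
    (ha' : DifferentiableAt ℝ (deriv a) x) (ha0 : a x ≠ 0) :
    HasDerivAt (fun t => -deriv a t / a t ^ 2)
      ((2 * deriv a x ^ 2 - a x * deriv (deriv a) x) / a x ^ 3) x := by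
  refine (ha'.hasDerivAt.fun_neg.div (ha.hasDerivAt.fun_pow 2)
    (pow_ne_zero 2 ha0)).congr_deriv ?_
  field_simp
  ring

def linearForm (a : ℝ → ℝ) : Fn := fun x u _ _ => a x ^ 3 * u

section LinearForm

variable (a : ℝ → ℝ)

lemma I1_linearForm : I1 (linearForm a) = ofX 0 := by
  funext x u p q; simp [I1, pdq, linearForm]

lemma I2_linearForm : I2 (linearForm a) = ofX 0 := by
  funext x u p q; simp [I2, I1_linearForm, pdp, linearForm]

lemma I3_linearForm : I3 (linearForm a) = ofX fun x => -a x ^ 3 := by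
  funext x u p q; simp [I3, I1_linearForm, I2_linearForm, pdu, linearForm]

lemma J3_linearForm : J3 (linearForm a) = ofX fun x => -a x := by
  funext x u p q
  rw [J3, I3_linearForm, ofX_apply, ← Odd.neg_pow (by decide : Odd 3), cbrt_pow_three, ofX_apply]

lemma I5_linearForm : I5 (linearForm a) = ofX fun x => -deriv a x / a x ^ 2 := by
  rw [I5_eq_ofX (I1_linearForm a) (J3_linearForm a)]
  funext x u p q
  simp only [ofX_apply, Pi.zero_apply, zero_mul, zero_add, deriv.fun_neg, neg_sq]
  exact mul_div_mul_left _ _ three_ne_zero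

lemma Kinv_linearForm {a : ℝ → ℝ} (ha : ContDiff ℝ 2 a) (ha0 : ∀ x, a x ≠ 0) :
    Kinv (linearForm a) =
      ofX fun x => (2 * a x * deriv (deriv a) x - 3 * deriv a x ^ 2) / a x ^ 4 := by
  rw [Kinv_eq_ofX (I2_linearForm a) (J3_linearForm a) (I5_linearForm a)]
  funext x u p q
  have hI5' := (hasDerivAt_neg_deriv_div_sq (ha.differentiable two_ne_zero x)
    (ha.differentiable_deriv_two x) (ha0 x)).deriv
  have hax := ha0 x
  simp only [ofX_apply, Pi.zero_apply, hI5']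
  field_simp
  ring

end LinearForm

/-- For the canonical linear form `f(x,u,p,q) = a(x)³·u` with `a` smooth
and nowhere vanishing, the invariants evaluate to `I₁ = 0, I₂ = 0, I₃ = −a³, J₃ = −a,
I₄ = 0, I₅ = −a'/a², I₇ = 0, Q = 0, K = (2aa'' − 3a'²)/a⁴`; consequently all the relative
invariants `I₆, I₈, I₁₀, I₁₁, I₁₂, I₁₃, I₁₄, I₁₅` vanish identically, and
`D̂ₓK = K'(x)` where `K` is regarded as a function of `x` alone. -/
theorem invariants_of_linear_fourDim (a : ℝ → ℝ)
    (ha : ContDiff ℝ (⊤ : ℕ∞) a) (ha0 : ∀ t, a t ≠ 0)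
    (f : Fn) (hfdef : f = fun x u _ _ => (a x)^3 * u)
    (Kfun : ℝ → ℝ)
    (hKfun : Kfun = fun x =>
      (2 * a x * deriv (deriv a) x - 3 * (deriv a x)^2) / (a x)^4) :
    ∀ x u p q : ℝ,
      I1 f x u p q = 0 ∧
      I2 f x u p q = 0 ∧
      I3 f x u p q = -(a x)^3 ∧
      J3 f x u p q = -(a x) ∧
      I4 f x u p q = 0 ∧
      I5 f x u p q = -(deriv a x) / (a x)^2 ∧
      I7 f x u p q = 0 ∧
      Qinv f x u p q = 0 ∧
      Kinv f x u p q = Kfun x ∧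
      I6 f x u p q = 0 ∧
      I8 f x u p q = 0 ∧
      I10 f x u p q = 0 ∧
      I11 f x u p q = 0 ∧
      I12 f x u p q = 0 ∧
      I13 f x u p q = 0 ∧
      I14 f x u p q = 0 ∧
      I15 f x u p q = 0 ∧
      Dhat f (Kinv f) x u p q = deriv Kfun x := by
  obtain rfl : f = linearForm a := hfdef
  have h₁ := I1_linearForm a
  have h₂ := I2_linearForm a
  have hJ := J3_linearForm a
  have h₅ := I5_linearForm a
  have hK : Kinv (linearForm a) = ofX Kfun :=
    hKfun ▸ Kinv_linearForm (ha.of_le (WithTop.coe_le_coe.2 le_top)) ha0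
  intro x u p q
  exact ⟨by simp [h₁], by simp [h₂], by simp [I3_linearForm], by simp [hJ],
    by simp [I4_eq_zero hJ], by simp [h₅], by simp [I7_eq_zero h₅],
    by simp [Qinv_eq_zero hJ h₅], by simp [hK], by simp [I6_eq_zero h₁ hJ],
    by simp [I8_eq_zero hJ], by simp [I10_eq_zero hJ h₅], by simp [I11_eq_zero hJ h₅],
    by simp [I12_eq_zero h₁ h₂ hJ h₅], by simp [I13_eq_zero hJ h₅ hK],
    by simp [I14_eq_zero hK], by simp [I15_eq_zero hJ hK], by simp [hK]⟩

end
end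

section
/- Let α be a real constant with α(α−3)(2α−3) ≠ 0, set m := (2α³−9α²+9α)^{1/3} (real cube root) and s := (3α²−9α+9)/m², and take f(x,u,p,q) = α·q²/p on the open set {p > 0, q ≠ 0}. Then: (i) a₁(x,u,p) = p^{α/3−1} satisfies D̂ₓa₁ = J₃I₅a₁, (a₁)_u = −Q·a₁, (a₁)_p = (I₄I₅ − I₇/J₃)a₁, (a₁)_q = 0; (ii) φ(x,u,p) = −(m/3)·ln p satisfies D̂ₓφ = −J₃, φ_u = −I₇, φ_p = −I₄; (iii) with χ(x,u,p) = ((αpx − αu + 3u)/m)·p^{α/3−1}, ψ(x,u,p) = (u − xp)·p^{α/3−1}, η := D̂ₓχ/D̂ₓφ and f̄ := s·χ + ψ, one has D̂ₓη = −J₃f̄, η_u = ((s+I₅²)/2 + I₂/(2J₃²))a₁ − I₇f̄, η_p = (I₅/J₃ + I₁/(3J₃²))a₁ − I₄f̄, η_q = a₁/J₃², D̂ₓχ = −J₃η, χ_u = −I₅a₁ − I₇η, χ_p = −a₁/J₃ − I₄η, I₇D̂ₓψ = J₃(ψ_u − a₁), ψ_x = χφ_x − p·a₁, and ψ_p = −I₄χ.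 -/
/-!
Invariants of the third-order ODE `u''' = f(x, u, u', u'')` under contact
transformations, following Cartan's equivalence method.
We write `p = u'`, `q = u''`.
-/

noncomputable section

/-!
For `f = αq²/p` every invariant up to `I₅` is, on `{p ≠ 0, q ≠ 0}`, a constant multiple of a
power `(q/p)ⁿ`, and `D̂ₓ` multiplies `c (q/p)ⁿ` by `n (α − 1) (q/p)`. This gives
`I₃ = (2α³ − 9α² + 9α)/27 · (q/p)³`, hence `J₃ = (m/3)(q/p)`, and a constant `I₅`, so that
`I₇ = Q = 0`. The functions `a₁`, `χ`, `ψ` have the form `(A x p + B u + C) p^k` and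
`η = D̂ₓχ / D̂ₓφ` the form `(A p²/q + B x p + C u) p^k` with `k = α/3 − 1`; in these closed forms
each identity becomes an algebraic one, using `m³ = 2α³ − 9α² + 9α`.
-/

lemma cbrt_cube (t : ℝ) : cbrt (t ^ 3) = t := by
  have key : ∀ s : ℝ, 0 ≤ s → (s ^ 3) ^ ((1 : ℝ) / 3) = s := fun s hs => by
    rw [← Real.rpow_natCast, ← Real.rpow_mul hs]; norm_num
  rcases le_or_gt 0 t with ht | ht
  · rw [cbrt, if_pos (by positivity), key t ht]
  · rw [cbrt, if_neg (not_le.mpr (Odd.pow_neg (by decide) ht)), ← Odd.neg_pow (by decide),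
      key (-t) (by linarith), neg_neg]

lemma cube_cbrt (y : ℝ) : cbrt y ^ 3 = y := by
  have key : ∀ s : ℝ, 0 ≤ s → (s ^ ((1 : ℝ) / 3)) ^ 3 = s := fun s hs => by
    rw [← Real.rpow_natCast, ← Real.rpow_mul hs]; norm_num
  rcases le_or_gt 0 y with hy | hy
  · rw [cbrt, if_pos hy, key y hy]
  · rw [cbrt, if_neg (not_le.mpr hy), Odd.neg_pow (by decide), key (-y) (by linarith), neg_neg]

section Congr

variable {f g h : Fn} {x u p q : ℝ}

lemma pdx_congr (hgh : ∀ x u p q, p ≠ 0 → q ≠ 0 → g x u p q = h x u p q)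
    (hp : p ≠ 0) (hq : q ≠ 0) : pdx g x u p q = pdx h x u p q := by
  simp only [pdx, hgh _ u p q hp hq]

lemma pdu_congr (hgh : ∀ x u p q, p ≠ 0 → q ≠ 0 → g x u p q = h x u p q)
    (hp : p ≠ 0) (hq : q ≠ 0) : pdu g x u p q = pdu h x u p q := by
  simp only [pdu, hgh x _ p q hp hq]

lemma pdp_congr (hgh : ∀ x u p q, p ≠ 0 → q ≠ 0 → g x u p q = h x u p q)
    (hp : p ≠ 0) (hq : q ≠ 0) : pdp g x u p q = pdp h x u p q :=
  Filter.EventuallyEq.deriv_eq <| (eventually_ne_nhds hp).mono fun _ ht => hgh x u _ q ht hq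

lemma pdq_congr (hgh : ∀ x u p q, p ≠ 0 → q ≠ 0 → g x u p q = h x u p q)
    (hp : p ≠ 0) (hq : q ≠ 0) : pdq g x u p q = pdq h x u p q :=
  Filter.EventuallyEq.deriv_eq <| (eventually_ne_nhds hq).mono fun _ ht => hgh x u p _ hp ht

lemma Dhat_congr (hgh : ∀ x u p q, p ≠ 0 → q ≠ 0 → g x u p q = h x u p q)
    (hp : p ≠ 0) (hq : q ≠ 0) : Dhat f g x u p q = Dhat f h x u p q := by
  simp only [Dhat, pdx_congr hgh hp hq, pdu_congr hgh hp hq, pdp_congr hgh hp hq,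
    pdq_congr hgh hp hq]

end Congr

def quadRHS (α : ℝ) : Fn := fun _ _ p q => α * q ^ 2 / p

def ratioPow (c : ℝ) (n : ℕ) : Fn := fun _ _ p q => c * (q / p) ^ n

section RatioPow

variable {c : ℝ} {n : ℕ} {x u p q : ℝ}

lemma pdx_ratioPow : pdx (ratioPow c n) x u p q = 0 := deriv_const _ _

lemma pdu_ratioPow : pdu (ratioPow c n) x u p q = 0 := deriv_const _ _

lemma pdp_ratioPow (hp : p ≠ 0) : pdp (ratioPow c n) x u p q = -(n * c * (q / p) ^ n / p) := by
  have h := (((hasDerivAt_const p q).div (hasDerivAt_id p) hp).pow n).const_mul c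
  refine h.deriv.trans ?_
  rcases n with _ | n
  · simp
  · simp only [Pi.div_apply, id, Nat.add_sub_cancel, div_pow, pow_succ]
    push_cast
    field_simp
    ring

lemma pdq_ratioPow (hq : q ≠ 0) : pdq (ratioPow c n) x u p q = n * c * (q / p) ^ n / q := by
  have h := (((hasDerivAt_id q).div_const p).pow n).const_mul c
  refine h.deriv.trans ?_
  rcases n with _ | n
  · simp
  · simp only [id, pow_succ]
    push_cast
    field_simp

lemma Dhat_quadRHS_ratioPow (α : ℝ) (hp : p ≠ 0) (hq : q ≠ 0) :
    Dhat (quadRHS α) (ratioPow c n) x u p q = n * (α - 1) * c * (q / p) ^ (n + 1) := by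
  rw [Dhat, pdx_ratioPow, pdu_ratioPow, pdp_ratioPow hp, pdq_ratioPow hq, quadRHS, div_pow, div_pow]
  field_simp
  ring

end RatioPow

section QuadRHS

variable {α m x u p q : ℝ}

lemma I1_quadRHS : I1 (quadRHS α) = ratioPow (-(2 * α)) 1 := by
  ext x u p q
  have h := ((hasDerivAt_pow 2 q).const_mul α).div_const p
  simp only [I1, pdq, quadRHS, h.deriv, ratioPow]
  push_cast
  ring

lemma pdu_quadRHS : pdu (quadRHS α) x u p q = 0 := deriv_const _ _

lemma pdp_quadRHS (hp : p ≠ 0) : pdp (quadRHS α) x u p q = -(α * (q / p) ^ 2) := by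
  have h := (hasDerivAt_inv hp).const_mul (α * q ^ 2)
  simp only [pdp, quadRHS, div_eq_mul_inv, h.deriv]
  ring

lemma I2_quadRHS (hp : p ≠ 0) (hq : q ≠ 0) :
    I2 (quadRHS α) x u p q = ratioPow (-(α * (2 * α - 3) / 9)) 2 x u p q := by
  rw [I2, pdp_quadRHS hp, I1_quadRHS, Dhat_quadRHS_ratioPow α hp hq]
  simp only [ratioPow]
  push_cast
  ring

lemma I3_quadRHS (hp : p ≠ 0) (hq : q ≠ 0) :
    I3 (quadRHS α) x u p q = ratioPow ((2 * α ^ 3 - 9 * α ^ 2 + 9 * α) / 27) 3 x u p q := by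
  rw [I3, pdu_quadRHS, I1_quadRHS, I2_quadRHS hp hq,
    Dhat_congr (fun _ _ _ _ => I2_quadRHS) hp hq, Dhat_quadRHS_ratioPow α hp hq]
  simp only [ratioPow]
  push_cast
  ring

lemma J3_quadRHS (hm3 : m ^ 3 = 2 * α ^ 3 - 9 * α ^ 2 + 9 * α) (hp : p ≠ 0) (hq : q ≠ 0) :
    J3 (quadRHS α) x u p q = ratioPow (m / 3) 1 x u p q := by
  rw [J3, I3_quadRHS hp hq, ← hm3, ← cbrt_cube (ratioPow (m / 3) 1 x u p q)]
  simp only [ratioPow]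
  ring_nf

lemma I4_quadRHS (hm3 : m ^ 3 = 2 * α ^ 3 - 9 * α ^ 2 + 9 * α) (hp : p ≠ 0) (hq : q ≠ 0) :
    I4 (quadRHS α) x u p q = m / (3 * p) := by
  rw [I4, pdq_congr (fun _ _ _ _ => J3_quadRHS hm3) hp hq, pdq_ratioPow hq]
  push_cast
  field_simp

lemma I5_quadRHS (hm3 : m ^ 3 = 2 * α ^ 3 - 9 * α ^ 2 + 9 * α) (hm0 : m ≠ 0)
    (hp : p ≠ 0) (hq : q ≠ 0) :
    I5 (quadRHS α) x u p q = ratioPow ((α - 3) / m) 0 x u p q := by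
  rw [I5, I1_quadRHS, J3_quadRHS hm3 hp hq, Dhat_congr (fun _ _ _ _ => J3_quadRHS hm3) hp hq,
    Dhat_quadRHS_ratioPow α hp hq]
  simp only [ratioPow, div_pow]
  field_simp
  ring

lemma I7_quadRHS (hm3 : m ^ 3 = 2 * α ^ 3 - 9 * α ^ 2 + 9 * α) (hm0 : m ≠ 0)
    (hp : p ≠ 0) (hq : q ≠ 0) :
    I7 (quadRHS α) x u p q = 0 := by
  rw [I7, pdq_congr (fun _ _ _ _ => I5_quadRHS hm3 hm0) hp hq, pdq_ratioPow hq]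
  simp

lemma Qinv_quadRHS (hm3 : m ^ 3 = 2 * α ^ 3 - 9 * α ^ 2 + 9 * α) (hm0 : m ≠ 0)
    (hp : p ≠ 0) (hq : q ≠ 0) :
    Qinv (quadRHS α) x u p q = 0 := by
  have hI5 : ∀ x u p q, p ≠ 0 → q ≠ 0 →
      I5 (quadRHS α) x u p q = ratioPow ((α - 3) / m) 0 x u p q :=
    fun _ _ _ _ => I5_quadRHS hm3 hm0
  rw [Qinv, I7_quadRHS hm3 hm0 hp hq, pdp_congr hI5 hp hq, pdp_ratioPow hp,
    pdu_congr (fun _ _ _ _ => J3_quadRHS hm3) hp hq, pdu_ratioPow, Dhat_congr hI5 hp hq,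
    Dhat_quadRHS_ratioPow α hp hq]
  simp

end QuadRHS

section Lifts

variable {f : Fn} {g : Fn3} {x u p q : ℝ}

lemma pdq_lift : pdq (lift g) x u p q = 0 := deriv_const _ _

lemma Dhat_lift :
    Dhat f (lift g) x u p q = pdx3 g x u p + p * pdu3 g x u p + q * pdp3 g x u p := by
  rw [Dhat, pdq_lift, mul_zero, add_zero]
  rfl

end Lifts

lemma deriv_mul_rpow {h : ℝ → ℝ} {h' p : ℝ} (k : ℝ) (hh : HasDerivAt h h' p) (hp : p ≠ 0) :
    deriv (fun t => h t * t ^ k) p = (h' + k * h p / p) * p ^ k := by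
  refine (hh.mul (Real.hasDerivAt_rpow_const (Or.inl hp))).deriv.trans ?_
  rw [Real.rpow_sub_one hp]
  ring

section AffineMulRpow

variable {g : Fn3} {A B C k x u p : ℝ}

lemma pdx3_of_eq_affine_mul_rpow (hg : ∀ x u p, g x u p = (A * x * p + B * u + C) * p ^ k) :
    pdx3 g x u p = A * p * p ^ k := by
  simp only [pdx3, hg]
  refine ((((((hasDerivAt_id x).const_mul A).mul_const p).add_const (B * u)).add_const
    C).mul_const (p ^ k)).deriv.trans ?_
  ring

lemma pdu3_of_eq_affine_mul_rpow (hg : ∀ x u p, g x u p = (A * x * p + B * u + C) * p ^ k) :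
    pdu3 g x u p = B * p ^ k := by
  simp only [pdu3, hg]
  refine (((((hasDerivAt_id u).const_mul B).const_add (A * x * p)).add_const C).mul_const
    (p ^ k)).deriv.trans ?_
  ring

lemma pdp3_of_eq_affine_mul_rpow (hg : ∀ x u p, g x u p = (A * x * p + B * u + C) * p ^ k)
    (hp : p ≠ 0) : pdp3 g x u p = (A * x + k * (A * x * p + B * u + C) / p) * p ^ k := by
  simp only [pdp3, hg]
  refine (deriv_mul_rpow k ((((hasDerivAt_id p).const_mul (A * x)).add_const (B * u)).add_const C)
    hp).trans ?_
  simp only [id]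
  ring

end AffineMulRpow

section MulLog

variable {g : Fn3} {c x u p : ℝ}

lemma pdx3_of_eq_mul_log (hg : ∀ x u p, g x u p = c * Real.log p) : pdx3 g x u p = 0 := by
  simp only [pdx3, hg, deriv_const]

lemma pdu3_of_eq_mul_log (hg : ∀ x u p, g x u p = c * Real.log p) : pdu3 g x u p = 0 := by
  simp only [pdu3, hg, deriv_const]

lemma pdp3_of_eq_mul_log (hg : ∀ x u p, g x u p = c * Real.log p) (hp : p ≠ 0) :
    pdp3 g x u p = c / p := by
  simp only [pdp3, hg]
  refine ((Real.hasDerivAt_log hp).const_mul c).deriv.trans ?_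
  ring

end MulLog

section QuadraticMulRpow

variable {g : Fn} {A B C k x u p q : ℝ}

lemma pdx_of_eq_quadratic_mul_rpow
    (hg : ∀ x u p q, p ≠ 0 → q ≠ 0 → g x u p q = (A * p ^ 2 / q + B * x * p + C * u) * p ^ k)
    (hp : p ≠ 0) (hq : q ≠ 0) : pdx g x u p q = B * p * p ^ k := by
  rw [pdx_congr hg hp hq]
  refine ((((((hasDerivAt_id x).const_mul B).mul_const p).const_add (A * p ^ 2 / q)).add_const
    (C * u)).mul_const (p ^ k)).deriv.trans ?_
  ring

lemma pdu_of_eq_quadratic_mul_rpow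
    (hg : ∀ x u p q, p ≠ 0 → q ≠ 0 → g x u p q = (A * p ^ 2 / q + B * x * p + C * u) * p ^ k)
    (hp : p ≠ 0) (hq : q ≠ 0) : pdu g x u p q = C * p ^ k := by
  rw [pdu_congr hg hp hq]
  refine (((((hasDerivAt_id u).const_mul C).const_add (A * p ^ 2 / q + B * x * p))).mul_const
    (p ^ k)).deriv.trans ?_
  ring

lemma pdp_of_eq_quadratic_mul_rpow
    (hg : ∀ x u p q, p ≠ 0 → q ≠ 0 → g x u p q = (A * p ^ 2 / q + B * x * p + C * u) * p ^ k)
    (hp : p ≠ 0) (hq : q ≠ 0) :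
    pdp g x u p q
      = (2 * A * p / q + B * x + k * (A * p ^ 2 / q + B * x * p + C * u) / p) * p ^ k := by
  rw [pdp_congr hg hp hq]
  refine (deriv_mul_rpow k (((((hasDerivAt_pow 2 p).const_mul A).div_const q).add
    ((hasDerivAt_id p).const_mul (B * x))).add_const (C * u)) hp).trans ?_
  simp only [Pi.add_apply, id]
  push_cast
  ring

lemma pdq_of_eq_quadratic_mul_rpow
    (hg : ∀ x u p q, p ≠ 0 → q ≠ 0 → g x u p q = (A * p ^ 2 / q + B * x * p + C * u) * p ^ k)
    (hp : p ≠ 0) (hq : q ≠ 0) : pdq g x u p q = -(A * p ^ 2 / q ^ 2) * p ^ k := by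
  rw [pdq_congr hg hp hq]
  refine (((((hasDerivAt_const q (A * p ^ 2)).div (hasDerivAt_id q) hq).add_const
    (B * x * p)).add_const (C * u)).mul_const (p ^ k)).deriv.trans ?_
  simp only [id]
  ring

end QuadraticMulRpow

section Solutions

variable {α m s : ℝ} {a1 φ χ ψ fbar : Fn3} {f η : Fn} {x u p q : ℝ}

lemma eta_eq_quadratic_mul_rpow (hm0 : m ≠ 0) (hφ : φ = fun _ _ p => -(m / 3) * Real.log p)
    (hχ : χ = fun x u p => ((α * p * x - α * u + 3 * u) / m) * p ^ (α / 3 - 1))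
    (hη : η = fun x u p q => Dhat f (lift χ) x u p q / Dhat f (lift φ) x u p q)
    (hp : p ≠ 0) (hq : q ≠ 0) :
    η x u p q = (-(9 / m ^ 2) * p ^ 2 / q + -(α ^ 2 / m ^ 2) * x * p + (3 - α) ^ 2 / m ^ 2 * u)
      * p ^ (α / 3 - 1) := by
  have hχ' : ∀ x u p, χ x u p = (α / m * x * p + (3 - α) / m * u + 0) * p ^ (α / 3 - 1) :=
    fun _ _ _ => by simp only [hχ]; ring
  have hφ' : ∀ x u p, φ x u p = -(m / 3) * Real.log p := fun _ _ _ => by simp only [hφ]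
  simp only [hη]
  rw [Dhat_lift, Dhat_lift, pdx3_of_eq_affine_mul_rpow hχ', pdu3_of_eq_affine_mul_rpow hχ',
    pdp3_of_eq_affine_mul_rpow hχ' hp, pdx3_of_eq_mul_log hφ', pdu3_of_eq_mul_log hφ',
    pdp3_of_eq_mul_log hφ' hp]
  field_simp
  ring

lemma a1_system (hm3 : m ^ 3 = 2 * α ^ 3 - 9 * α ^ 2 + 9 * α) (hm0 : m ≠ 0)
    (ha1 : a1 = fun _ _ p => p ^ (α / 3 - 1)) (hp : p ≠ 0) (hq : q ≠ 0) :
    Dhat (quadRHS α) (lift a1) x u p q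
        = J3 (quadRHS α) x u p q * I5 (quadRHS α) x u p q * a1 x u p ∧
      pdu3 a1 x u p = -(Qinv (quadRHS α) x u p q) * a1 x u p ∧
      pdp3 a1 x u p = (I4 (quadRHS α) x u p q * I5 (quadRHS α) x u p q
        - I7 (quadRHS α) x u p q / J3 (quadRHS α) x u p q) * a1 x u p ∧
      pdq (lift a1) x u p q = 0 := by
  have ha1' : ∀ x u p, a1 x u p = (0 * x * p + 0 * u + 1) * p ^ (α / 3 - 1) :=
    fun _ _ _ => by simp only [ha1]; ring
  refine ⟨?_, ?_, ?_, pdq_lift⟩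
  all_goals
    simp only [Dhat_lift, pdx3_of_eq_affine_mul_rpow ha1', pdu3_of_eq_affine_mul_rpow ha1',
      pdp3_of_eq_affine_mul_rpow ha1' hp, J3_quadRHS hm3 hp hq, I5_quadRHS hm3 hm0 hp hq,
      I4_quadRHS hm3 hp hq, I7_quadRHS hm3 hm0 hp hq, Qinv_quadRHS hm3 hm0 hp hq, ratioPow]
    simp only [ha1]
    field_simp
    ring

lemma phi_system (hm3 : m ^ 3 = 2 * α ^ 3 - 9 * α ^ 2 + 9 * α) (hm0 : m ≠ 0)
    (hφ : φ = fun _ _ p => -(m / 3) * Real.log p) (hp : p ≠ 0) (hq : q ≠ 0) :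
    Dhat (quadRHS α) (lift φ) x u p q = -(J3 (quadRHS α) x u p q) ∧
      pdu3 φ x u p = -(I7 (quadRHS α) x u p q) ∧
      pdp3 φ x u p = -(I4 (quadRHS α) x u p q) := by
  have hφ' : ∀ x u p, φ x u p = -(m / 3) * Real.log p := fun _ _ _ => by simp only [hφ]
  refine ⟨?_, ?_, ?_⟩
  · rw [Dhat_lift, pdx3_of_eq_mul_log hφ', pdu3_of_eq_mul_log hφ', pdp3_of_eq_mul_log hφ' hp,
      J3_quadRHS hm3 hp hq, ratioPow]
    ring
  · rw [pdu3_of_eq_mul_log hφ', I7_quadRHS hm3 hm0 hp hq, neg_zero]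
  · rw [pdp3_of_eq_mul_log hφ' hp, I4_quadRHS hm3 hp hq]
    ring

lemma eta_system (hm3 : m ^ 3 = 2 * α ^ 3 - 9 * α ^ 2 + 9 * α) (hm0 : m ≠ 0)
    (hs : s = (3 * α ^ 2 - 9 * α + 9) / m ^ 2)
    (ha1 : a1 = fun _ _ p => p ^ (α / 3 - 1))
    (hφ : φ = fun _ _ p => -(m / 3) * Real.log p)
    (hχ : χ = fun x u p => ((α * p * x - α * u + 3 * u) / m) * p ^ (α / 3 - 1))
    (hψ : ψ = fun x u p => (u - x * p) * p ^ (α / 3 - 1))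
    (hη : η = fun x u p q => Dhat (quadRHS α) (lift χ) x u p q / Dhat (quadRHS α) (lift φ) x u p q)
    (hfbar : fbar = fun x u p => s * χ x u p + ψ x u p) (hp : p ≠ 0) (hq : q ≠ 0) :
    Dhat (quadRHS α) η x u p q = -(J3 (quadRHS α) x u p q) * fbar x u p ∧
      pdu η x u p q = ((s + (I5 (quadRHS α) x u p q) ^ 2) / 2
        + I2 (quadRHS α) x u p q / (2 * (J3 (quadRHS α) x u p q) ^ 2)) * a1 x u p
          - I7 (quadRHS α) x u p q * fbar x u p ∧
      pdp η x u p q = (I5 (quadRHS α) x u p q / J3 (quadRHS α) x u p q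
        + I1 (quadRHS α) x u p q / (3 * (J3 (quadRHS α) x u p q) ^ 2)) * a1 x u p
          - I4 (quadRHS α) x u p q * fbar x u p ∧
      pdq η x u p q = a1 x u p / (J3 (quadRHS α) x u p q) ^ 2 := by
  have hη' := fun x u p q (hp : p ≠ 0) (hq : q ≠ 0) =>
    eta_eq_quadratic_mul_rpow (x := x) (u := u) hm0 hφ hχ hη hp hq
  simp only [Dhat, pdx_of_eq_quadratic_mul_rpow hη' hp hq, pdu_of_eq_quadratic_mul_rpow hη' hp hq,
    pdp_of_eq_quadratic_mul_rpow hη' hp hq, pdq_of_eq_quadratic_mul_rpow hη' hp hq,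
    I1_quadRHS, I2_quadRHS hp hq, J3_quadRHS hm3 hp hq, I4_quadRHS hm3 hp hq,
    I5_quadRHS hm3 hm0 hp hq, I7_quadRHS hm3 hm0 hp hq, ratioPow, quadRHS, hfbar, hχ, hψ, ha1, hs]
  refine ⟨?_, ?_, ?_, ?_⟩
  · linear_combination (norm := (field_simp; ring1))
      (p ^ (α / 3 - 1) * q * (u - x * p) / (3 * p * m ^ 2)) * hm3
  · field_simp
    ring
  · linear_combination (norm := (field_simp; ring1))
      (p ^ (α / 3 - 1) * (u - x * p) / (3 * p * m ^ 2)) * hm3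
  · field_simp
    ring

lemma chi_system (hm3 : m ^ 3 = 2 * α ^ 3 - 9 * α ^ 2 + 9 * α) (hm0 : m ≠ 0)
    (ha1 : a1 = fun _ _ p => p ^ (α / 3 - 1))
    (hφ : φ = fun _ _ p => -(m / 3) * Real.log p)
    (hχ : χ = fun x u p => ((α * p * x - α * u + 3 * u) / m) * p ^ (α / 3 - 1))
    (hη : η = fun x u p q => Dhat (quadRHS α) (lift χ) x u p q / Dhat (quadRHS α) (lift φ) x u p q)
    (hp : p ≠ 0) (hq : q ≠ 0) :
    Dhat (quadRHS α) (lift χ) x u p q = -(J3 (quadRHS α) x u p q) * η x u p q ∧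
      pdu3 χ x u p = -(I5 (quadRHS α) x u p q) * a1 x u p - I7 (quadRHS α) x u p q * η x u p q ∧
      pdp3 χ x u p = -(a1 x u p / J3 (quadRHS α) x u p q) - I4 (quadRHS α) x u p q * η x u p q := by
  have hχ' : ∀ x u p, χ x u p = (α / m * x * p + (3 - α) / m * u + 0) * p ^ (α / 3 - 1) :=
    fun _ _ _ => by simp only [hχ]; ring
  simp only [Dhat_lift, pdx3_of_eq_affine_mul_rpow hχ', pdu3_of_eq_affine_mul_rpow hχ',
    pdp3_of_eq_affine_mul_rpow hχ' hp, eta_eq_quadratic_mul_rpow hm0 hφ hχ hη hp hq,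
    J3_quadRHS hm3 hp hq, I4_quadRHS hm3 hp hq, I5_quadRHS hm3 hm0 hp hq,
    I7_quadRHS hm3 hm0 hp hq, ratioPow, ha1]
  refine ⟨?_, ?_, ?_⟩ <;>
  · field_simp
    ring

lemma psi_system (hm3 : m ^ 3 = 2 * α ^ 3 - 9 * α ^ 2 + 9 * α) (hm0 : m ≠ 0)
    (ha1 : a1 = fun _ _ p => p ^ (α / 3 - 1))
    (hφ : φ = fun _ _ p => -(m / 3) * Real.log p)
    (hχ : χ = fun x u p => ((α * p * x - α * u + 3 * u) / m) * p ^ (α / 3 - 1))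
    (hψ : ψ = fun x u p => (u - x * p) * p ^ (α / 3 - 1)) (hp : p ≠ 0) (hq : q ≠ 0) :
    I7 (quadRHS α) x u p q * Dhat (quadRHS α) (lift ψ) x u p q
        = J3 (quadRHS α) x u p q * (pdu3 ψ x u p - a1 x u p) ∧
      pdx3 ψ x u p = χ x u p * pdx3 φ x u p - p * a1 x u p ∧
      pdp3 ψ x u p = -(I4 (quadRHS α) x u p q) * χ x u p := by
  have hψ' : ∀ x u p, ψ x u p = (-1 * x * p + 1 * u + 0) * p ^ (α / 3 - 1) :=
    fun _ _ _ => by simp only [hψ]; ring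
  have hφ' : ∀ x u p, φ x u p = -(m / 3) * Real.log p := fun _ _ _ => by simp only [hφ]
  simp only [pdx3_of_eq_affine_mul_rpow hψ', pdu3_of_eq_affine_mul_rpow hψ',
    pdp3_of_eq_affine_mul_rpow hψ' hp, pdx3_of_eq_mul_log hφ', I4_quadRHS hm3 hp hq,
    I7_quadRHS hm3 hm0 hp hq, ha1, hχ]
  refine ⟨?_, ?_, ?_⟩
  · ring
  · ring
  · field_simp
    ring

end Solutions

/-- For `f(x,u,p,q) = α·q²/p` on `{p > 0, q ≠ 0}`, with
`α(α−3)(2α−3) ≠ 0`, `m` the real cube root of `2α³−9α²+9α` and `s = (3α²−9α+9)/m²`,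
the explicit functions `a₁ = p^{α/3−1}`, `φ = −(m/3)ln p`,
`χ = ((αpx − αu + 3u)/m)p^{α/3−1}`, `ψ = (u − xp)p^{α/3−1}` solve the linear PDE systems
(i)–(iii) of Proposition 4.1, with `η := D̂ₓχ/D̂ₓφ` and `f̄ := s·χ + ψ`. -/
theorem construction_example1 (α m s : ℝ)
    (hα : α * (α - 3) * (2*α - 3) ≠ 0)
    (hm : m = cbrt (2*α^3 - 9*α^2 + 9*α))
    (hs : s = (3*α^2 - 9*α + 9) / m^2)
    (f : Fn) (hfdef : f = fun _ _ p q => α * q^2 / p)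
    (a1 : Fn3) (ha1 : a1 = fun _ _ p => p ^ (α/3 - 1))
    (φ : Fn3) (hφ : φ = fun _ _ p => -(m/3) * Real.log p)
    (χ : Fn3) (hχ : χ = fun x u p => ((α*p*x - α*u + 3*u) / m) * p ^ (α/3 - 1))
    (ψ : Fn3) (hψ : ψ = fun x u p => (u - x*p) * p ^ (α/3 - 1))
    (η : Fn)
    (hη : η = fun x u p q => Dhat f (lift χ) x u p q / Dhat f (lift φ) x u p q)
    (fbar : Fn3) (hfbar : fbar = fun x u p => s * χ x u p + ψ x u p) :
    ∀ x u p q : ℝ, 0 < p → q ≠ 0 →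
      -- (i)  a₁ solves the system (4.3)
      (Dhat f (lift a1) x u p q = J3 f x u p q * I5 f x u p q * a1 x u p ∧
       pdu3 a1 x u p = -(Qinv f x u p q) * a1 x u p ∧
       pdp3 a1 x u p
         = (I4 f x u p q * I5 f x u p q - I7 f x u p q / J3 f x u p q) * a1 x u p ∧
       pdq (lift a1) x u p q = 0) ∧
      -- (ii)  φ solves the system (4.4)
      (Dhat f (lift φ) x u p q = -(J3 f x u p q) ∧
       pdu3 φ x u p = -(I7 f x u p q) ∧
       pdp3 φ x u p = -(I4 f x u p q)) ∧
      -- (iii)  η, χ, ψ solve the system (4.5)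
      (Dhat f η x u p q = -(J3 f x u p q) * fbar x u p ∧
       pdu η x u p q
         = ((s + (I5 f x u p q)^2)/2 + I2 f x u p q / (2 * (J3 f x u p q)^2)) * a1 x u p
             - I7 f x u p q * fbar x u p ∧
       pdp η x u p q
         = (I5 f x u p q / J3 f x u p q + I1 f x u p q / (3 * (J3 f x u p q)^2)) * a1 x u p
             - I4 f x u p q * fbar x u p ∧
       pdq η x u p q = a1 x u p / (J3 f x u p q)^2 ∧
       Dhat f (lift χ) x u p q = -(J3 f x u p q) * η x u p q ∧
       pdu3 χ x u p = -(I5 f x u p q) * a1 x u p - I7 f x u p q * η x u p q ∧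
       pdp3 χ x u p = -(a1 x u p / J3 f x u p q) - I4 f x u p q * η x u p q ∧
       I7 f x u p q * Dhat f (lift ψ) x u p q
         = J3 f x u p q * (pdu3 ψ x u p - a1 x u p) ∧
       pdx3 ψ x u p = χ x u p * pdx3 φ x u p - p * a1 x u p ∧
       pdp3 ψ x u p = -(I4 f x u p q) * χ x u p) := by
  intro x u p q hp hq
  have hm3 : m ^ 3 = 2 * α ^ 3 - 9 * α ^ 2 + 9 * α := by rw [hm, cube_cbrt]
  have hm0 : m ≠ 0 := by
    rintro rfl
    exact hα (by linear_combination -hm3)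
  obtain rfl : f = quadRHS α := hfdef
  obtain ⟨hη₁, hη₂, hη₃, hη₄⟩ := eta_system hm3 hm0 hs ha1 hφ hχ hψ hη hfbar hp.ne' hq
  obtain ⟨hχ₁, hχ₂, hχ₃⟩ := chi_system hm3 hm0 ha1 hφ hχ hη hp.ne' hq
  exact ⟨a1_system hm3 hm0 ha1 hp.ne' hq, phi_system hm3 hm0 hφ hp.ne' hq,
    hη₁, hη₂, hη₃, hη₄, hχ₁, hχ₂, hχ₃, psi_system hm3 hm0 ha1 hφ hχ hψ hp.ne' hq⟩

end
end

section
/- Let α be a real constant with α(α−3)(2α−3) ≠ 0 and set m := (2α³−9α²+9α)^{1/3} (real cube root). The map (x̄,ū,p̄) = (φ,ψ,χ) on U = {(x,u,p) : p > 0} given by φ(x,u,p) = −(m/3)·ln p, ψ(x,u,p) = (u − xp)·p^{α/3−1}, χ(x,u,p) = ((αpx − αu + 3u)/m)·p^{α/3−1} is a proper contact transformation: its Jacobian determinant equals p^{2α/3−2} ≠ 0, and it satisfies the contact conditions ψ_p − χφ_p = 0, ψ_u − χφ_u = λ, ψ_x − χφ_x = −pλ with contact multiplier λ(x,u,p) =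 p^{α/3−1}. -/
/-!
Invariants of the third-order ODE `u''' = f(x, u, u', u'')` under contact
transformations, following Cartan's equivalence method.
We write `p = u'`, `q = u''`.
-/

noncomputable section

/-- The Jacobian determinant of the map `(x,u,p) ↦ (φ, ψ, χ)`. -/
def jac3 (φ ψ χ : Fn3) : Fn3 := fun x u p =>
  Matrix.det !![pdx3 φ x u p, pdu3 φ x u p, pdp3 φ x u p;
                pdx3 ψ x u p, pdu3 ψ x u p, pdp3 ψ x u p;
                pdx3 χ x u p, pdu3 χ x u p, pdp3 χ x u p]

/-- A contact transformation `(x̄,ū,p̄) = (φ(x,u,p), ψ(x,u,p), χ(x,u,p))` on an open set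
`U ⊆ ℝ³`: a smooth map with nowhere-vanishing Jacobian determinant, together with a
nowhere-vanishing contact multiplier `lam` such that `dψ − χ dφ = lam (du − p dx)`. -/
structure IsContactTransformOn (U : Set (ℝ × ℝ × ℝ)) (φ ψ χ lam : Fn3) : Prop where
  isOpen : IsOpen U
  smooth : ContDiffOn ℝ (⊤ : ℕ∞) (fun v : ℝ × ℝ × ℝ =>
      (φ v.1 v.2.1 v.2.2, ψ v.1 v.2.1 v.2.2, χ v.1 v.2.1 v.2.2)) U
  jac_ne : ∀ x u p, (x, u, p) ∈ U → jac3 φ ψ χ x u p ≠ 0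
  lam_ne : ∀ x u p, (x, u, p) ∈ U → lam x u p ≠ 0
  contact_p : ∀ x u p, (x, u, p) ∈ U → pdp3 ψ x u p - χ x u p * pdp3 φ x u p = 0
  contact_u : ∀ x u p, (x, u, p) ∈ U → pdu3 ψ x u p - χ x u p * pdu3 φ x u p = lam x u p
  contact_x : ∀ x u p, (x, u, p) ∈ U → pdx3 ψ x u p - χ x u p * pdx3 φ x u p = -p * lam x u p

/-- `u` is a smooth solution of the third-order ODE `u''' = f(x,u,u',u'')` on `I`. -/
def SolvesODE3 (f : Fn) (I : Set ℝ) (u : ℝ → ℝ) : Prop :=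
  ContDiffOn ℝ (⊤ : ℕ∞) u I ∧
  ∀ x ∈ I, deriv (deriv (deriv u)) x = f x (u x) (deriv u x) (deriv (deriv u) x)

/-- The ODE `u''' = f(x,u,u',u'')` is equivalent to `ū''' = f̄(x̄,ū,ū',ū'')` under the
contact transformation `(φ, ψ, χ)` on `U`: for every smooth solution `u` of the first
equation, defined on an open interval, whose prolonged graph `(x, u(x), u'(x))` lies in `U`
and for which `x̄(x) := φ(x,u(x),u'(x))` has nonvanishing derivative, the function `v` of
`x̄` defined by `v(x̄(x)) = ψ(x,u(x),u'(x))` is a smooth solution of the second equation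
and satisfies `dv/dx̄ = χ(x,u(x),u'(x))`. -/
def ContactEquivOn (f fbar : Fn) (U : Set (ℝ × ℝ × ℝ)) (φ ψ χ : Fn3) : Prop :=
  ∀ (I : Set ℝ) (u : ℝ → ℝ), IsOpen I → I.OrdConnected →
    SolvesODE3 f I u →
    (∀ x ∈ I, (x, u x, deriv u x) ∈ U) →
    (∀ x ∈ I, deriv (fun t => φ t (u t) (deriv u t)) x ≠ 0) →
    ∃ v : ℝ → ℝ,
      ContDiffOn ℝ (⊤ : ℕ∞) v ((fun t => φ t (u t) (deriv u t)) '' I) ∧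
      (∀ x ∈ I, v (φ x (u x) (deriv u x)) = ψ x (u x) (deriv u x)) ∧
      (∀ x ∈ I, deriv v (φ x (u x) (deriv u x)) = χ x (u x) (deriv u x)) ∧
      (∀ y ∈ (fun t => φ t (u t) (deriv u t)) '' I,
        deriv (deriv (deriv v)) y = fbar y (v y) (deriv v y) (deriv (deriv v) y))

/-!
Everything is a direct computation of partial derivatives. Since `φ` depends on `p` alone, the
Jacobian determinant collapses to `φ_p (ψ_x χ_u − ψ_u χ_x) = λ²`, and the contact conditions
in `x` and `u` reduce to `ψ_x = −pλ`, `ψ_u = λ`. The constant `m` is nonzero because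
`m³ = 2α³ − 9α² + 9α = α(α − 3)(2α − 3)`.
-/

lemma cbrt_ne_zero {y : ℝ} (hy : y ≠ 0) : cbrt y ≠ 0 := by
  unfold cbrt
  split_ifs with h
  · exact (Real.rpow_pos_of_pos (lt_of_le_of_ne h (Ne.symm hy)) _).ne'
  · simpa using (Real.rpow_pos_of_pos (neg_pos.mpr (not_le.mp h)) ((1 : ℝ)/3)).ne'

lemma jac3_of_pdx3_eq_zero_of_pdu3_eq_zero {φ ψ χ : Fn3} {x u p : ℝ}
    (hx : pdx3 φ x u p = 0) (hu : pdu3 φ x u p = 0) :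
    jac3 φ ψ χ x u p =
      pdp3 φ x u p * (pdx3 ψ x u p * pdu3 χ x u p - pdu3 ψ x u p * pdx3 χ x u p) := by
  simp [jac3, Matrix.det_fin_three, hx, hu]
  ring

namespace Example1

def phi (m : ℝ) : Fn3 := fun _ _ p => -(m/3) * Real.log p

def psi (α : ℝ) : Fn3 := fun x u p => (u - x*p) * p ^ (α/3 - 1)

def chi (α m : ℝ) : Fn3 := fun x u p => ((α*p*x - α*u + 3*u) / m) * p ^ (α/3 - 1)

def multiplier (α : ℝ) : Fn3 := fun _ _ p => p ^ (α/3 - 1)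

variable {α m x u p : ℝ}

lemma pdx3_phi : pdx3 (phi m) x u p = 0 := by simp [pdx3, phi]

lemma pdu3_phi : pdu3 (phi m) x u p = 0 := by simp [pdu3, phi]

lemma pdp3_phi (hp : 0 < p) : pdp3 (phi m) x u p = -(m/3) * p⁻¹ :=
  ((Real.hasDerivAt_log hp.ne').const_mul _).deriv

lemma pdx3_psi : pdx3 (psi α) x u p = -p * multiplier α x u p := by
  have h : HasDerivAt (fun t : ℝ => u - t*p) (-p) x := by
    simpa using ((hasDerivAt_id x).mul_const p).const_sub u
  exact (h.mul_const _).deriv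

lemma pdu3_psi : pdu3 (psi α) x u p = multiplier α x u p :=
  ((((hasDerivAt_id u).sub_const (x*p)).mul_const (p ^ (α/3 - 1))).deriv).trans (one_mul _)

lemma pdp3_psi (hp : 0 < p) :
    pdp3 (psi α) x u p = -x * p ^ (α/3 - 1) + (u - x*p) * ((α/3 - 1) * p ^ (α/3 - 1 - 1)) := by
  have h : HasDerivAt (fun t : ℝ => u - x*t) (-x) p := by
    simpa using ((hasDerivAt_id p).const_mul x).const_sub u
  exact (h.mul (Real.hasDerivAt_rpow_const (Or.inl hp.ne'))).deriv

lemma pdx3_chi : pdx3 (chi α m) x u p = α*p/m * multiplier α x u p := by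
  have h : HasDerivAt (fun t : ℝ => α*p*t - α*u + 3*u) (α*p) x := by
    simpa using (((hasDerivAt_id x).const_mul (α*p)).sub_const (α*u)).add_const (3*u)
  exact ((h.div_const m).mul_const _).deriv

lemma pdu3_chi : pdu3 (chi α m) x u p = (3 - α)/m * multiplier α x u p := by
  have h : HasDerivAt (fun t : ℝ => α*p*x - α*t + 3*t) (3 - α) u :=
    (((hasDerivAt_const u (α*p*x)).sub ((hasDerivAt_id u).const_mul α)).add
      ((hasDerivAt_id u).const_mul 3)).congr_deriv (by ring)
  exact ((h.div_const m).mul_const _).deriv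

lemma multiplier_pos (hp : 0 < p) : 0 < multiplier α x u p := Real.rpow_pos_of_pos hp _

lemma multiplier_mul_self (hp : 0 < p) :
    multiplier α x u p * multiplier α x u p = p ^ (2*α/3 - 2) := by
  rw [multiplier, ← Real.rpow_add hp, show α/3 - 1 + (α/3 - 1) = 2*α/3 - 2 by ring]

lemma jac3_phi_psi_chi (hm : m ≠ 0) (hp : 0 < p) :
    jac3 (phi m) (psi α) (chi α m) x u p = p ^ (2*α/3 - 2) := by
  rw [jac3_of_pdx3_eq_zero_of_pdu3_eq_zero pdx3_phi pdu3_phi, pdp3_phi hp, pdx3_psi, pdu3_psi,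
    pdx3_chi, pdu3_chi, ← multiplier_mul_self hp]
  field_simp
  ring

lemma contact_p (hm : m ≠ 0) (hp : 0 < p) :
    pdp3 (psi α) x u p - chi α m x u p * pdp3 (phi m) x u p = 0 := by
  rw [pdp3_psi hp, pdp3_phi hp, Real.rpow_sub_one hp.ne' (α/3 - 1)]
  simp only [chi]
  generalize p ^ (α/3 - 1) = w
  field_simp
  ring

lemma contact_u :
    pdu3 (psi α) x u p - chi α m x u p * pdu3 (phi m) x u p = multiplier α x u p := by
  rw [pdu3_psi, pdu3_phi, mul_zero, sub_zero]

lemma contact_x :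
    pdx3 (psi α) x u p - chi α m x u p * pdx3 (phi m) x u p = -p * multiplier α x u p := by
  rw [pdx3_psi, pdx3_phi, mul_zero, sub_zero]

lemma contDiffOn_phi_psi_chi : ContDiffOn ℝ (⊤ : ℕ∞) (fun v : ℝ × ℝ × ℝ =>
    (phi m v.1 v.2.1 v.2.2, psi α v.1 v.2.1 v.2.2, chi α m v.1 v.2.1 v.2.2)) {v | 0 < v.2.2} := by
  intro v hv
  have hp : v.2.2 ≠ 0 := ne_of_gt hv
  apply ContDiffAt.contDiffWithinAt
  simp only [phi, psi, chi]
  fun_prop (disch := exact hp)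

theorem isContactTransformOn (hm : m ≠ 0) :
    IsContactTransformOn {v | 0 < v.2.2} (phi m) (psi α) (chi α m) (multiplier α) where
  isOpen := isOpen_lt continuous_const (continuous_snd.comp continuous_snd)
  smooth := contDiffOn_phi_psi_chi
  jac_ne _ _ _ hp := (jac3_phi_psi_chi hm hp).trans_ne (Real.rpow_pos_of_pos hp _).ne'
  lam_ne _ _ _ hp := (multiplier_pos hp).ne'
  contact_p _ _ _ hp := contact_p hm hp
  contact_u _ _ _ _ := contact_u
  contact_x _ _ _ _ := contact_x

end Example1

/-- For `α(α−3)(2α−3) ≠ 0` and `m` the real cube root of `2α³−9α²+9α`,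
the map `(x̄,ū,p̄) = (−(m/3)ln p, (u−xp)p^{α/3−1}, ((αpx−αu+3u)/m)p^{α/3−1})` on
`U = {p > 0}` is a proper contact transformation: its Jacobian determinant equals
`p^{2α/3−2} ≠ 0` and the contact conditions hold with multiplier `λ = p^{α/3−1}`. -/
theorem example1_is_contact_transformation (α m : ℝ)
    (hα : α * (α - 3) * (2*α - 3) ≠ 0)
    (hm : m = cbrt (2*α^3 - 9*α^2 + 9*α))
    (U : Set (ℝ × ℝ × ℝ)) (hU : U = {v : ℝ × ℝ × ℝ | 0 < v.2.2})
    (φ : Fn3) (hφ : φ = fun _ _ p => -(m/3) * Real.log p)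
    (ψ : Fn3) (hψ : ψ = fun x u p => (u - x*p) * p ^ (α/3 - 1))
    (χ : Fn3) (hχ : χ = fun x u p => ((α*p*x - α*u + 3*u) / m) * p ^ (α/3 - 1))
    (lam : Fn3) (hlam : lam = fun _ _ p => p ^ (α/3 - 1)) :
    IsContactTransformOn U φ ψ χ lam ∧
    ∀ x u p : ℝ, 0 < p →
      jac3 φ ψ χ x u p = p ^ (2*α/3 - 2) ∧
      p ^ (2*α/3 - 2) ≠ 0 ∧
      pdp3 ψ x u p - χ x u p * pdp3 φ x u p = 0 ∧
      pdu3 ψ x u p - χ x u p * pdu3 φ x u p = lam x u p ∧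
      pdx3 ψ x u p - χ x u p * pdx3 φ x u p = -p * lam x u p := by
  subst hU hφ hψ hχ hlam
  have hm0 : m ≠ 0 := by
    rw [hm, show 2*α^3 - 9*α^2 + 9*α = α * (α - 3) * (2*α - 3) by ring]
    exact cbrt_ne_zero hα
  exact ⟨Example1.isContactTransformOn hm0, fun x u p hp =>
    ⟨Example1.jac3_phi_psi_chi hm0 hp, (Real.rpow_pos_of_pos hp _).ne', Example1.contact_p hm0 hp,
      Example1.contact_u, Example1.contact_x⟩⟩
end
end

section
/- The map (x̄,ū,p̄) = (p, u − xp, −x) on ℝ³ is a contact transformation with contact multiplier λ ≡ 1 and Jacobian determinant equal to 1. Moreover, if u: I → ℝ is a smooth solution of u‴ = −x·(u′)⁴(u″)³ + u·(u′)³(u″)³ on an open interval I with u″ nowhere vanishing on I, then t ↦ u′ is a diffeomorphism of I onto its image, and the function v defined on that image by v(u′(x)) = u(x) − x·u′(x) is a smooth solution of the linear equation v‴(t) = t³·v(t). -/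
/-!
Invariants of the third-order ODE `u''' = f(x, u, u', u'')` under contact
transformations, following Cartan's equivalence method.
We write `p = u'`, `q = u''`.
-/

noncomputable section

/-!
The map `(x, u, p) ↦ (p, u − x p, −x)` is the Legendre transformation, since
`d(u − x p) + x dp = du − p dx`. Along a solution with `u'' ≠ 0`, `t = u'(x)` is a new
coordinate, and `v(t) = u − x t` has `v' = −x`, `v'' = −1/u''`, `v''' = u'''/u''³`.
The right-hand side factors as `u''' = u'³ u''³ (u − x u')`, so `v''' = t³ v`.
-/

open Set Filter Topology Function
open scoped ContDiff

theorem jac3_legendre (x u p : ℝ) :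
    jac3 (fun _ _ p => p) (fun x u p => u - x * p) (fun x _ _ => -x) x u p = 1 := by
  simp [jac3, pdx3, pdu3, pdp3, Matrix.det_fin_three]

theorem isContactTransformOn_legendre :
    IsContactTransformOn univ (fun _ _ p => p) (fun x u p => u - x * p) (fun x _ _ => -x)
      (fun _ _ _ => 1) where
  isOpen := isOpen_univ
  smooth := by
    have : ContDiff ℝ ∞ fun v : ℝ × ℝ × ℝ => (v.2.2, v.2.1 - v.1 * v.2.2, -v.1) := by fun_prop
    exact this.contDiffOn
  jac_ne x u p _ := by simp [jac3_legendre]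
  lam_ne _ _ _ _ := one_ne_zero
  contact_p x u p _ := by simp [pdp3]
  contact_u x u p _ := by simp [pdu3]
  contact_x x u p _ := by simp [pdx3]

section InverseFunction

variable {g : ℝ → ℝ} {I : Set ℝ} {x : ℝ}

theorem Set.OrdConnected.injOn_of_deriv_ne_zero (hI : I.OrdConnected)
    (hg : ∀ x ∈ I, DifferentiableAt ℝ g x) (hg' : ∀ x ∈ I, deriv g x ≠ 0) : InjOn g I := by
  have hcont : ContinuousOn g I := fun x hx => (hg x hx).continuousAt.continuousWithinAt
  rcases hasDerivWithinAt_forall_lt_or_forall_gt_of_forall_ne hI.convex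
    (fun x hx => (hg x hx).hasDerivAt.hasDerivWithinAt) hg' with hneg | hpos
  · exact (strictAntiOn_of_deriv_neg hI.convex hcont
      fun x hx => hneg x (interior_subset hx)).injOn
  · exact (strictMonoOn_of_deriv_pos hI.convex hcont
      fun x hx => hpos x (interior_subset hx)).injOn

theorem HasStrictDerivAt.eventually_nhds_of_eventually_comp {g' : ℝ} {P : ℝ → Prop}
    (hg : HasStrictDerivAt g g' x) (hg' : g' ≠ 0) (h : ∀ᶠ y in 𝓝 x, P (g y)) :
    ∀ᶠ t in 𝓝 (g x), P t := by
  rw [← hg.map_nhds_eq hg']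
  exact h

theorem IsOpen.isOpen_image_of_contDiffOn {n : ℕ∞ω} (hI : IsOpen I) (hg : ContDiffOn ℝ n g I)
    (hn : n ≠ 0) (hg' : ∀ x ∈ I, deriv g x ≠ 0) : IsOpen (g '' I) := by
  rw [isOpen_iff_mem_nhds]
  rintro _ ⟨x, hx, rfl⟩
  exact ((hg.contDiffAt (hI.mem_nhds hx)).hasStrictDerivAt hn).eventually_nhds_of_eventually_comp
    (hg' x hx) (eventually_of_mem (hI.mem_nhds hx) fun y hy => mem_image_of_mem g hy)

theorem ContDiffAt.contDiffAt_of_eventually_left_inverse {f : ℝ → ℝ} {n : ℕ∞ω}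
    (hf : ContDiffAt ℝ n f x) (hn : n ≠ 0) (hf' : deriv f x ≠ 0)
    (hg : ∀ᶠ y in 𝓝 x, g (f y) = y) : ContDiffAt ℝ n g (f x) := by
  have hder := ((hf.differentiableAt hn).hasDerivAt).hasFDerivAt_equiv hf'
  exact (hf.to_localInverse hder hn).congr_of_eventuallyEq
    ((hf.hasStrictFDerivAt' hder hn).localInverse_unique hg)

theorem Set.InjOn.eventually_invFunOn_apply (hinj : InjOn g I) (hI : IsOpen I) (hx : x ∈ I) :
    ∀ᶠ y in 𝓝 x, invFunOn g I (g y) = y :=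
  eventually_of_mem (hI.mem_nhds hx) fun _ hy => hinj.leftInvOn_invFunOn hy

theorem Set.InjOn.hasStrictDerivAt_invFunOn (hinj : InjOn g I) (hI : IsOpen I) (hx : x ∈ I)
    {g' : ℝ} (hg : HasStrictDerivAt g g' x) (hg' : g' ≠ 0) :
    HasStrictDerivAt (invFunOn g I) g'⁻¹ (g x) :=
  hg.to_local_left_inverse hg' (hinj.eventually_invFunOn_apply hI hx)

theorem Set.InjOn.contDiffOn_invFunOn {n : ℕ∞ω} (hinj : InjOn g I) (hI : IsOpen I)
    (hg : ContDiffOn ℝ n g I) (hn : n ≠ 0) (hg' : ∀ x ∈ I, deriv g x ≠ 0) :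
    ContDiffOn ℝ n (invFunOn g I) (g '' I) := by
  rintro _ ⟨x, hx, rfl⟩
  exact ((hg.contDiffAt (hI.mem_nhds hx)).contDiffAt_of_eventually_left_inverse hn (hg' x hx)
    (hinj.eventually_invFunOn_apply hI hx)).contDiffWithinAt

end InverseFunction

/-- The sign is that of the contact map `ū = u − x p`: the negative of the classical
Legendre transform. -/
def legendreTransform (u : ℝ → ℝ) (I : Set ℝ) (t : ℝ) : ℝ :=
  u (invFunOn (deriv u) I t) - invFunOn (deriv u) I t * t

section Legendre

variable {u : ℝ → ℝ} {I : Set ℝ} {x : ℝ}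

theorem legendreTransform_deriv_apply (hinj : InjOn (deriv u) I) (hx : x ∈ I) :
    legendreTransform u I (deriv u x) = u x - x * deriv u x := by
  simp [legendreTransform, hinj.leftInvOn_invFunOn hx]

theorem contDiffOn_legendreTransform (hI : IsOpen I) (hu : ContDiffOn ℝ ∞ u I)
    (hinj : InjOn (deriv u) I) (hu'' : ∀ x ∈ I, deriv (deriv u) x ≠ 0) :
    ContDiffOn ℝ ∞ (legendreTransform u I) (deriv u '' I) := by
  have hu' : ContDiffOn ℝ ∞ (deriv u) I := hu.deriv_of_isOpen hI (m := ∞) (by simp)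
  have hw := hinj.contDiffOn_invFunOn hI hu' (by simp) hu''
  have himage := hI.isOpen_image_of_contDiffOn hu' (by simp) hu''
  rintro _ ⟨x, hx, rfl⟩
  have hwx : ContDiffAt ℝ ∞ (invFunOn (deriv u) I) (deriv u x) :=
    hw.contDiffAt (himage.mem_nhds (mem_image_of_mem _ hx))
  have hux : ContDiffAt ℝ ∞ u (invFunOn (deriv u) I (deriv u x)) := by
    rw [hinj.leftInvOn_invFunOn hx]
    exact hu.contDiffAt (hI.mem_nhds hx)
  exact ((hux.comp _ hwx).sub (hwx.mul contDiffAt_id)).contDiffWithinAt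

theorem ContDiffOn.hasStrictDerivAt_deriv (hI : IsOpen I) (hu : ContDiffOn ℝ 2 u I)
    (hx : x ∈ I) : HasStrictDerivAt (deriv u) (deriv (deriv u) x) x :=
  ((hu.deriv_of_isOpen hI (m := 1) (by norm_num)).contDiffAt (hI.mem_nhds hx)).hasStrictDerivAt
    one_ne_zero

theorem hasDerivAt_legendreTransform (hI : IsOpen I) (hu : ContDiffOn ℝ 2 u I)
    (hinj : InjOn (deriv u) I) (hx : x ∈ I) (hx'' : deriv (deriv u) x ≠ 0) :
    HasDerivAt (legendreTransform u I) (-x) (deriv u x) := by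
  have hw : HasDerivAt (invFunOn (deriv u) I) (deriv (deriv u) x)⁻¹ (deriv u x) :=
    (hinj.hasStrictDerivAt_invFunOn hI hx (hu.hasStrictDerivAt_deriv hI hx) hx'').hasDerivAt
  have hwx : invFunOn (deriv u) I (deriv u x) = x := hinj.leftInvOn_invFunOn hx
  have hux : HasDerivAt u (deriv u x) (invFunOn (deriv u) I (deriv u x)) := by
    rw [hwx]
    exact ((hu.contDiffAt (hI.mem_nhds hx)).differentiableAt (by norm_num)).hasDerivAt
  exact ((hux.comp _ hw).sub (hw.mul (hasDerivAt_id' _))).congr_deriv (by rw [hwx]; ring)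

theorem deriv_legendreTransform_eventuallyEq (hI : IsOpen I) (hu : ContDiffOn ℝ 2 u I)
    (hinj : InjOn (deriv u) I) (hu'' : ∀ x ∈ I, deriv (deriv u) x ≠ 0) (hx : x ∈ I) :
    deriv (legendreTransform u I) =ᶠ[𝓝 (deriv u x)] fun t => -invFunOn (deriv u) I t := by
  refine (hu.hasStrictDerivAt_deriv hI hx).eventually_nhds_of_eventually_comp (hu'' x hx) ?_
  filter_upwards [hI.mem_nhds hx] with y hy
  rw [(hasDerivAt_legendreTransform hI hu hinj hy (hu'' y hy)).deriv,
    hinj.leftInvOn_invFunOn hy]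

theorem deriv_deriv_legendreTransform_eventuallyEq (hI : IsOpen I) (hu : ContDiffOn ℝ 2 u I)
    (hinj : InjOn (deriv u) I) (hu'' : ∀ x ∈ I, deriv (deriv u) x ≠ 0) (hx : x ∈ I) :
    deriv (deriv (legendreTransform u I)) =ᶠ[𝓝 (deriv u x)]
      fun t => -(deriv (deriv u) (invFunOn (deriv u) I t))⁻¹ := by
  refine (hu.hasStrictDerivAt_deriv hI hx).eventually_nhds_of_eventually_comp (hu'' x hx) ?_
  filter_upwards [hI.mem_nhds hx] with y hy
  rw [(deriv_legendreTransform_eventuallyEq hI hu hinj hu'' hy).deriv_eq,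
    hinj.leftInvOn_invFunOn hy]
  exact (hinj.hasStrictDerivAt_invFunOn hI hy (hu.hasStrictDerivAt_deriv hI hy)
    (hu'' y hy)).hasDerivAt.neg.deriv

theorem deriv_deriv_deriv_legendreTransform (hI : IsOpen I) (hu : ContDiffOn ℝ 3 u I)
    (hinj : InjOn (deriv u) I) (hu'' : ∀ x ∈ I, deriv (deriv u) x ≠ 0) (hx : x ∈ I) :
    deriv (deriv (deriv (legendreTransform u I))) (deriv u x) =
      deriv (deriv (deriv u)) x / deriv (deriv u) x ^ 3 := by
  have hu₂ : ContDiffOn ℝ 2 u I := hu.of_le (by norm_num)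
  rw [(deriv_deriv_legendreTransform_eventuallyEq hI hu₂ hinj hu'' hx).deriv_eq]
  have hw : HasDerivAt (invFunOn (deriv u) I) (deriv (deriv u) x)⁻¹ (deriv u x) :=
    (hinj.hasStrictDerivAt_invFunOn hI hx (hu₂.hasStrictDerivAt_deriv hI hx)
      (hu'' x hx)).hasDerivAt
  have hwx : invFunOn (deriv u) I (deriv u x) = x := hinj.leftInvOn_invFunOn hx
  have hu''' : HasDerivAt (deriv (deriv u)) (deriv (deriv (deriv u)) x)
      (invFunOn (deriv u) I (deriv u x)) := by
    rw [hwx]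
    exact ((hu.deriv_of_isOpen hI (m := 2) (by norm_num)).hasStrictDerivAt_deriv hI hx).hasDerivAt
  have hv : HasDerivAt (fun t => -(deriv (deriv u) (invFunOn (deriv u) I t))⁻¹) _ (deriv u x) :=
    ((hu'''.comp _ hw).inv (by rw [comp_apply, hwx]; exact hu'' x hx)).neg
  rw [hv.deriv, comp_apply, hwx]
  field_simp

end Legendre

/-- The map `(x̄,ū,p̄) = (p, u − xp, −x)` on `ℝ³` is a contact
transformation with multiplier `λ ≡ 1` and Jacobian determinant `1`.  Moreover, if `u` is
a smooth solution of `u''' = −x·(u')⁴(u'')³ + u·(u')³(u'')³` on an open interval `I` with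
`u''` nowhere vanishing, then `u'` is a diffeomorphism of `I` onto its image and the
function `v` defined on that image by `v(u'(x)) = u(x) − x·u'(x)` is a smooth solution of
`v'''(t) = t³·v(t)`. -/
theorem example2_linearizes
    (φ ψ χ lam : Fn3)
    (hφ : φ = fun _ _ p => p) (hψ : ψ = fun x u p => u - x*p)
    (hχ : χ = fun x _ _ => -x) (hlam : lam = fun _ _ _ => 1) :
    (IsContactTransformOn Set.univ φ ψ χ lam ∧
      ∀ x u p : ℝ, jac3 φ ψ χ x u p = 1) ∧
    ∀ (I : Set ℝ), IsOpen I → I.OrdConnected →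
      ∀ u : ℝ → ℝ,
        SolvesODE3 (fun x' u' p' q' => -x' * p'^4 * q'^3 + u' * p'^3 * q'^3) I u →
        (∀ x ∈ I, deriv (deriv u) x ≠ 0) →
        (Set.InjOn (deriv u) I ∧
         IsOpen (deriv u '' I) ∧
         (∃ w : ℝ → ℝ, ContDiffOn ℝ (⊤ : ℕ∞) w (deriv u '' I) ∧
            ∀ x ∈ I, w (deriv u x) = x) ∧
         ∃ v : ℝ → ℝ,
           ContDiffOn ℝ (⊤ : ℕ∞) v (deriv u '' I) ∧
           (∀ x ∈ I, v (deriv u x) = u x - x * deriv u x) ∧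
           ∀ t ∈ deriv u '' I, deriv (deriv (deriv v)) t = t^3 * v t) := by
  subst hφ hψ hχ hlam
  refine ⟨⟨isContactTransformOn_legendre, jac3_legendre⟩, ?_⟩
  rintro I hI hIc u ⟨hu, hode⟩ hu''
  have hu' : ContDiffOn ℝ ∞ (deriv u) I := hu.deriv_of_isOpen hI (m := ∞) (by simp)
  have hinj : InjOn (deriv u) I := hIc.injOn_of_deriv_ne_zero
    (fun x hx => (hu'.contDiffAt (hI.mem_nhds hx)).differentiableAt (by simp)) hu''
  refine ⟨hinj, hI.isOpen_image_of_contDiffOn hu' (by simp) hu'',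
    ⟨invFunOn (deriv u) I, hinj.contDiffOn_invFunOn hI hu' (by simp) hu'',
      fun x hx => hinj.leftInvOn_invFunOn hx⟩,
    legendreTransform u I, contDiffOn_legendreTransform hI hu hinj hu'',
    fun x hx => legendreTransform_deriv_apply hinj hx, ?_⟩
  rintro _ ⟨x, hx, rfl⟩
  rw [deriv_deriv_deriv_legendreTransform hI (hu.of_le ENat.LEInfty.out) hinj hu'' hx, hode x hx,
    legendreTransform_deriv_apply hinj hx]
  field_simp [hu'' x hx]
  ring
end
end
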